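/- Under the setup of the previous context, P(f(μ) ≤ f(τ)) = Q((‖s‖² − Re(s_τ^H s_μ)) / √(((1+ρ)/2) ‖s_μ − s_τ‖²)), where Q is the standard normal tail function. -/

import Mathlib

/-!
For fixed `y`, `f τ y - f μ y = T y - c` with `c = ‖s‖² - Re (s_τᴴ s_μ)` deterministic and
`T y = Re ((s_τ - s_μ)ᴴ y) = ∑ i, Re (conj (s_τ i - s_μ i) * y i)` linear in the noise.
Under `CN(0, 2v)` the summand `Re (conj d * z)` is `N(0, |d|² v)`, the summands are independent,
and sums of independent real Gaussians are Gaussian, so `T ~ N(0, v ‖s_τ - s_μ‖²)` with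
`v = (1 + ρ) / 2`. Hence `P(f μ ≤ f τ) = P(T ≥ c) = Q(c / √(v ‖s_τ - s_μ‖²))`.
-/

open MeasureTheory Real

/-- The circular complex Gaussian `CN(0, 2v)`: real and imaginary parts independent `N(0, v)`. -/
noncomputable def complexGaussian (v : NNReal) : Measure ℂ :=
  ((ProbabilityTheory.gaussianReal 0 v).prod (ProbabilityTheory.gaussianReal 0 v)).map
    (fun p => (p.1 : ℂ) + p.2 * Complex.I)

open ProbabilityTheory
open scoped NNReal ComplexConjugate

instance (v : ℝ≥0) : IsProbabilityMeasure (complexGaussian v) :=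
  Measure.isProbabilityMeasure_map (by fun_prop)

lemma map_sum_eq_gaussianReal_of_iIndepFun {Ω ι : Type*} {mΩ : MeasurableSpace Ω}
    {P : Measure Ω} [IsProbabilityMeasure P] {X : ι → Ω → ℝ} (hX : ∀ i, Measurable (X i))
    (hind : iIndepFun X P) {m : ι → ℝ} {v : ι → ℝ≥0}
    (hlaw : ∀ i, P.map (X i) = gaussianReal (m i) (v i)) (S : Finset ι) :
    P.map (∑ i ∈ S, X i) = gaussianReal (∑ i ∈ S, m i) (∑ i ∈ S, v i) := by
  classical
  induction S using Finset.induction_on with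
  | empty => simp [gaussianReal_zero_var, Pi.zero_def]
  | insert a S ha ih =>
    rw [Finset.sum_insert ha, Finset.sum_insert ha, Finset.sum_insert ha]
    exact gaussianReal_add_gaussianReal_of_indepFun
      (hind.indepFun_finsetSum_of_notMem hX ha).symm (hlaw a) ih

lemma pi_map_sum_eq_gaussianReal {ι : Type*} [Fintype ι] {Ω : ι → Type*}
    {mΩ : ∀ i, MeasurableSpace (Ω i)} {μ : ∀ i, Measure (Ω i)} [∀ i, IsProbabilityMeasure (μ i)]
    {X : ∀ i, Ω i → ℝ} (hX : ∀ i, Measurable (X i)) {m : ι → ℝ} {v : ι → ℝ≥0}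
    (hlaw : ∀ i, (μ i).map (X i) = gaussianReal (m i) (v i)) :
    (Measure.pi μ).map (fun ω => ∑ i, X i (ω i)) = gaussianReal (∑ i, m i) (∑ i, v i) := by
  have hXω : ∀ i, Measurable (fun ω : ∀ i, Ω i => X i (ω i)) :=
    fun i => (hX i).comp (measurable_pi_apply i)
  have hlawω : ∀ i, (Measure.pi μ).map (fun ω => X i (ω i)) = gaussianReal (m i) (v i) := by
    intro i
    rw [← hlaw i, ← (measurePreserving_eval μ i).map_eq,
      Measure.map_map (hX i) (measurable_pi_apply i)]
    rfl
  simpa [Finset.sum_fn] using map_sum_eq_gaussianReal_of_iIndepFun hXω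
    (iIndepFun_pi fun i => (hX i).aemeasurable) hlawω Finset.univ

lemma complexGaussian_map_re_conj_mul (v : ℝ≥0) (c : ℂ) :
    (complexGaussian v).map (fun z => (conj c * z).re) = gaussianReal 0 (‖c‖₊ ^ 2 * v) := by
  have hcomp : (fun z : ℂ => (conj c * z).re) ∘ (fun p : ℝ × ℝ => (p.1 : ℂ) + p.2 * Complex.I)
      = (fun q : ℝ × ℝ => q.1 + q.2) ∘ Prod.map (c.re * ·) (c.im * ·) := by
    funext p
    simp [Complex.mul_re]
  rw [complexGaussian, Measure.map_map (by fun_prop) (by fun_prop), hcomp,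
    ← Measure.map_map (by fun_prop) (by fun_prop),
    ← Measure.map_prod_map _ _ (by fun_prop) (by fun_prop), gaussianReal_map_const_mul,
    gaussianReal_map_const_mul]
  change Measure.conv _ _ = _
  rw [gaussianReal_conv_gaussianReal, ← add_mul]
  congr 1
  · simp
  · ext
    simp only [NNReal.coe_add, NNReal.coe_mul, NNReal.coe_mk, NNReal.coe_pow, coe_nnnorm,
      Complex.sq_norm, Complex.normSq_apply]
    ring

lemma gaussianReal_Ici_eq_Ioi {V : ℝ≥0} (hV : V ≠ 0) (c : ℝ) :
    gaussianReal 0 V (Set.Ici c) = gaussianReal 0 1 (Set.Ioi (c / √V)) := by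
  have hσ : 0 < √(V : ℝ) := Real.sqrt_pos.2 (by positivity)
  have hstd : (gaussianReal 0 V).map (· / √V) = gaussianReal 0 1 := by
    rw [gaussianReal_map_div_const, zero_div]
    congr
    ext
    simp [Real.sq_sqrt V.coe_nonneg, hV]
  have : NullSingletonClass (gaussianReal 0 1) := nullSingletonClass_gaussianReal one_ne_zero
  rw [measure_congr Ioi_ae_eq_Ici, ← hstd, Measure.map_apply (by fun_prop) measurableSet_Ici]
  congr
  ext x
  simp [div_le_div_iff_of_pos_right hσ]

lemma pi_complexGaussian_map_re_sum_conj_mul {ι : Type*} [Fintype ι] (v : ℝ≥0) (d : ι → ℂ) :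
    (Measure.pi fun _ : ι => complexGaussian v).map (fun y => ∑ i, (conj (d i) * y i).re)
      = gaussianReal 0 (v * ∑ i, ‖d i‖₊ ^ 2) := by
  rw [Finset.mul_sum]
  simpa [mul_comm v] using pi_map_sum_eq_gaussianReal (μ := fun _ => complexGaussian v)
    (fun i => by fun_prop) (fun i => complexGaussian_map_re_conj_mul v (d i))

lemma re_sum_conj_mul_add_sub_self {ι : Type*} [Fintype ι] (a u y : ι → ℂ) :
    (∑ i, conj (a i) * (u i + y i)).re - (∑ i, conj (u i) * (u i + y i)).re
      = ∑ i, (conj (a i - u i) * y i).re - ((∑ i, ‖u i‖ ^ 2) - (∑ i, conj (a i) * u i).re) := by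
  simp only [Complex.re_sum, ← Finset.sum_sub_distrib]
  refine Finset.sum_congr rfl fun i _ => ?_
  simp only [map_sub, Complex.mul_re, Complex.sub_re, Complex.sub_im, Complex.add_re,
    Complex.add_im, Complex.conj_re, Complex.conj_im, Complex.sq_norm, Complex.normSq_apply]
  ring

lemma re_sum_conj_shift_le_iff {n : ℕ} [NeZero n] (s y : Fin n → ℂ) (μ₀ τ : Fin n) :
    (∑ i, conj (s (i - μ₀)) * (s (i - μ₀) + y i)).re
        ≤ (∑ i, conj (s (i - τ)) * (s (i - μ₀) + y i)).re ↔
      (∑ i, ‖s i‖ ^ 2) - (∑ i, conj (s (i - τ)) * s (i - μ₀)).re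
        ≤ ∑ i, (conj (s (i - τ) - s (i - μ₀)) * y i).re := by
  have h := re_sum_conj_mul_add_sub_self (fun i => s (i - τ)) (fun i => s (i - μ₀)) y
  have hreindex : ∑ i, ‖s (i - μ₀)‖ ^ 2 = ∑ i, ‖s i‖ ^ 2 :=
    Equiv.sum_comp (Equiv.subRight μ₀) (fun i => ‖s i‖ ^ 2)
  rw [hreindex] at h
  constructor <;> intro <;> linarith

theorem stmt14_general (n : ℕ) (ρ : ℝ) (hρ : 0 ≤ ρ)
    (s : Fin n → ℂ) (μ₀ τ : Fin n)
    (hshift : (fun i => s (i - τ)) ≠ (fun i => s (i - μ₀)))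
    (μY : Measure (Fin n → ℂ))
    (hY : μY = Measure.pi (fun _ : Fin n => complexGaussian (Real.toNNReal ((1 + ρ) / 2))))
    (f : Fin n → (Fin n → ℂ) → ℝ)
    (hf : ∀ t y, f t y = (∑ i, (starRingEnd ℂ) (s (i - t)) * (s (i - μ₀) + y i)).re) :
    μY {y | f μ₀ y ≤ f τ y} =
      ProbabilityTheory.gaussianReal 0 1 (Set.Ioi
        (((∑ i, ‖s i‖ ^ 2) - (∑ i, (starRingEnd ℂ) (s (i - τ)) * s (i - μ₀)).re)
          / Real.sqrt ((1 + ρ) / 2 * ∑ i, ‖s (i - μ₀) - s (i - τ)‖ ^ 2))) := by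
  have : NeZero n := NeZero.of_pos μ₀.pos
  set v : ℝ≥0 := ((1 + ρ) / 2).toNNReal with hv
  set V : ℝ≥0 := v * ∑ i, ‖s (i - τ) - s (i - μ₀)‖₊ ^ 2 with hVdef
  have hevent : {y | f μ₀ y ≤ f τ y} =
      (fun y => ∑ i, (conj (s (i - τ) - s (i - μ₀)) * y i).re) ⁻¹' Set.Ici
        ((∑ i, ‖s i‖ ^ 2) - (∑ i, conj (s (i - τ)) * s (i - μ₀)).re) := by
    ext y
    simpa only [Set.mem_ofPred_eq, Set.mem_preimage, Set.mem_Ici, hf]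
      using re_sum_conj_shift_le_iff s y μ₀ τ
  have hV : (V : ℝ) = (1 + ρ) / 2 * ∑ i, ‖s (i - μ₀) - s (i - τ)‖ ^ 2 := by
    simp only [hVdef, hv, NNReal.coe_sum, NNReal.coe_mul, NNReal.coe_pow, coe_nnnorm,
      Real.coe_toNNReal _ (by linarith : 0 ≤ (1 + ρ) / 2), norm_sub_rev]
  have hV0 : V ≠ 0 := by
    refine mul_ne_zero (by rw [hv, Ne, Real.toNNReal_eq_zero]; linarith) ?_
    obtain ⟨i, hi⟩ := Function.ne_iff.1 hshift
    exact (Finset.sum_pos' (fun _ _ => zero_le)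
      ⟨i, Finset.mem_univ _, pow_pos (nnnorm_pos.2 (sub_ne_zero.2 hi)) 2⟩).ne'
  rw [hevent, ← Measure.map_apply (by fun_prop) measurableSet_Ici, hY,
    pi_complexGaussian_map_re_sum_conj_mul, gaussianReal_Ici_eq_Ioi hV0, hV]

/-- under the setup of Statement 13 (with `s_τ ≠ s_{μ₀}`),
`P(f(μ₀) ≤ f(τ)) = Q((‖s‖² − Re(s_τᴴ s_{μ₀})) / √(((1+ρ)/2) ‖s_{μ₀} − s_τ‖²))`,
where `Q(x) = P(N(0,1) > x)` is the standard normal tail function. -/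
theorem stmt14 (n : ℕ) (hn : 1 ≤ n) (ρ : ℝ) (hρ : 0 ≤ ρ)
    (s : Fin n → ℂ) (μ₀ τ : Fin n) (hτμ : τ ≠ μ₀)
    (hshift : (fun i => s (i - τ)) ≠ (fun i => s (i - μ₀)))
    (μY : Measure (Fin n → ℂ))
    (hY : μY = Measure.pi (fun _ : Fin n => complexGaussian (Real.toNNReal ((1 + ρ) / 2))))
    (f : Fin n → (Fin n → ℂ) → ℝ)
    (hf : ∀ t y, f t y = (∑ i, (starRingEnd ℂ) (s (i - t)) * (s (i - μ₀) + y i)).re) :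
    μY {y | f μ₀ y ≤ f τ y} =
      ProbabilityTheory.gaussianReal 0 1 (Set.Ioi
        (((∑ i, ‖s i‖ ^ 2) - (∑ i, (starRingEnd ℂ) (s (i - τ)) * s (i - μ₀)).re)
          / Real.sqrt ((1 + ρ) / 2 * ∑ i, ‖s (i - μ₀) - s (i - τ)‖ ^ 2))) :=
  stmt14_general n ρ hρ s μ₀ τ hshift μY hY f hf
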